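/- Let E be a real normed vector space, U ⊆ E an open set, and ω : U → Λ²(E;ℝ) a smooth map into continuous alternating bilinear forms which is closed, meaning that for all x ∈ U and all u, v, w ∈ E one has Dω(x)(u)(v,w) − Dω(x)(v)(u,w) + Dω(x)(w)(u,v) = 0, where Dω(x) denotes the Fréchet derivative of ω at x. Suppose X, Y : U → E are smooth vector fields lying in the kernel of ω, i.e. ω(x)(X(x), v) = 0 and ω(x)(Y(x), v) = 0 for every x ∈ U and every v ∈ E. Then their Lie bracket also lies in the kernel: ω(x)([X,Y](x), v) = 0 for every x ∈ U and every v ∈ E, where [X,Y](x) = DY(x)(X(x)) − DX(x)(Y(x)). -/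

import Mathlib

/-- **Involutivity of the kernel distribution of a closed 2-form.**
Let `E` be a real normed vector space, `U ⊆ E` open, and `ω` a smooth map from `U`
into continuous alternating bilinear forms on `E` which is closed, i.e.
`Dω(x)(u)(v,w) − Dω(x)(v)(u,w) + Dω(x)(w)(u,v) = 0` for all `x ∈ U`, `u v w ∈ E`.
If the smooth vector fields `X, Y : U → E` lie in the kernel of `ω`, then so does
their Lie bracket `[X,Y](x) = DY(x)(X(x)) − DX(x)(Y(x))`. -/
theorem kernel_of_closed_two_form_involutive
    {E : Type*} [NormedAddCommGroup E] [NormedSpace ℝ E]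
    (U : Set E) (hU : IsOpen U)
    (ω : E → (E →L[ℝ] E →L[ℝ] ℝ))
    (hω : ContDiffOn ℝ (⊤ : ℕ∞) ω U)
    (halt : ∀ x ∈ U, ∀ u v : E, ω x u v = - ω x v u)
    (hclosed : ∀ x ∈ U, ∀ u v w : E,
      fderiv ℝ ω x u v w - fderiv ℝ ω x v u w + fderiv ℝ ω x w u v = 0)
    (X Y : E → E)
    (hX : ContDiffOn ℝ (⊤ : ℕ∞) X U) (hY : ContDiffOn ℝ (⊤ : ℕ∞) Y U)
    (hXker : ∀ x ∈ U, ∀ v : E, ω x (X x) v = 0)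
    (hYker : ∀ x ∈ U, ∀ v : E, ω x (Y x) v = 0) :
    ∀ x ∈ U, ∀ v : E, ω x (fderiv ℝ Y x (X x) - fderiv ℝ X x (Y x)) v = 0 := by
  intro x hx v
  have hωx : DifferentiableAt ℝ ω x :=
    (hω.differentiableOn (by simp)).differentiableAt (hU.mem_nhds hx)
  -- Key: for any vector field Z in the kernel, ω x (DZ u) w = - Dω(x)(u)(Z x, w).
  have key : ∀ Z : E → E, ContDiffOn ℝ (⊤ : ℕ∞) Z U → (∀ y ∈ U, ∀ v : E, ω y (Z y) v = 0) →
      ∀ u w : E, ω x (fderiv ℝ Z x u) w = - fderiv ℝ ω x u (Z x) w := by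
    intro Z hZ hZker u w
    have hZx : DifferentiableAt ℝ Z x :=
      (hZ.differentiableOn (by simp)).differentiableAt (hU.mem_nhds hx)
    have hF : (fun y => ω y (Z y)) =ᶠ[nhds x] (fun _ => (0 : E →L[ℝ] ℝ)) :=
      Filter.eventuallyEq_of_mem (hU.mem_nhds hx)
        (fun y hy => ContinuousLinearMap.ext (hZker y hy))
    have h0 : fderiv ℝ (fun y => ω y (Z y)) x = 0 := by
      rw [hF.fderiv_eq, fderiv_const_apply]
    have hsum : (ω x).comp (fderiv ℝ Z x) + (fderiv ℝ ω x).flip (Z x) = 0 := by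
      rw [← fderiv_clm_apply hωx hZx, h0]
    have := congrFun (congrArg (fun T : E →L[ℝ] E →L[ℝ] ℝ => fun a b => T a b) hsum) u
    have h := congrFun this w
    simp only [ContinuousLinearMap.add_apply, ContinuousLinearMap.comp_apply,
      ContinuousLinearMap.flip_apply, ContinuousLinearMap.zero_apply] at h
    linarith
  have hXY : ω x (fderiv ℝ Y x (X x)) v = - fderiv ℝ ω x (X x) (Y x) v :=
    key Y hY hYker (X x) v
  have hYX : ω x (fderiv ℝ X x (Y x)) v = - fderiv ℝ ω x (Y x) (X x) v :=
    key X hX hXker (Y x) v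
  have hvXY : fderiv ℝ ω x v (X x) (Y x) = 0 := by
    have h := key X hX hXker v (Y x)
    have : ω x (fderiv ℝ X x v) (Y x) = 0 := by
      rw [halt x hx, hYker x hx]; ring
    linarith
  have hc := hclosed x hx (X x) (Y x) v
  have hsub : ω x (fderiv ℝ Y x (X x) - fderiv ℝ X x (Y x)) v
      = ω x (fderiv ℝ Y x (X x)) v - ω x (fderiv ℝ X x (Y x)) v := by
    simp [map_sub]
  rw [hsub, hXY, hYX]
  linarith
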